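/- arXiv:1101.3632 — 4 statements merged into one kernel-verified Lean document; each statement's English description precedes it below -/
import Mathlib

section
/- Every partial n-ary quasigroup f : Σ^{n-1} × Σ' → Σ with |Σ'| = |Σ| − 1 is extendable to an n-ary quasigroup on Σ. -/
def IsQuasigroup {α : Type*} {n : ℕ} (f : (Fin n → α) → α) : Prop :=
  ∀ (i : Fin n) (x : Fin n → α),
    Function.Bijective fun a => f (Function.update x i a)

/-- A partial `(n+1)`-ary quasigroup with domain `α^n × S` (the last coordinate
restricted to `S`): distinct values at any two domain points at Hamming distance 1. -/
def IsPartialQG {α : Type*} [Fintype α] [DecidableEq α] {n : ℕ} (S : Finset α)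
    (f : (Fin (n + 1) → α) → α) : Prop :=
  ∀ x y : Fin (n + 1) → α, x (Fin.last n) ∈ S → y (Fin.last n) ∈ S →
    hammingDist x y = 1 → f x ≠ f y

/-- `f` (defined on `α^n × S`) extends to a full `(n+1)`-ary quasigroup. -/
def Extendable {α : Type*} [Fintype α] [DecidableEq α] {n : ℕ} (S : Finset α)
    (f : (Fin (n + 1) → α) → α) : Prop :=
  ∃ q : (Fin (n + 1) → α) → α, IsQuasigroup q ∧
    ∀ x : Fin (n + 1) → α, x (Fin.last n) ∈ S → q x = f x

theorem extendable_of_card_sub_one {α : Type*} [Fintype α] [DecidableEq α] {n : ℕ}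
    (S : Finset α) (hS : S.card = Fintype.card α - 1) (f : (Fin (n + 1) → α) → α)
    (hf : IsPartialQG S f) : Extendable S f := by
  classical
  rcases isEmpty_or_nonempty α with hα | hα
  · exact ⟨f, fun i x => (IsEmpty.false (x 0)).elim, fun x _ => rfl⟩
  have hcard : 1 ≤ Fintype.card α := Fintype.card_pos
  set L := Fin.last n with hL
  -- Hamming distance of two points differing in one coordinate is 1
  have H1 : ∀ (x : Fin (n+1) → α) (i : Fin (n+1)) (a b : α), a ≠ b →
      hammingDist (Function.update x i a) (Function.update x i b) = 1 := by
    intro x i a b hab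
    have hfil : (Finset.univ.filter
        fun j => Function.update x i a j ≠ Function.update x i b j) = {i} := by
      ext j
      by_cases hj : j = i <;> simp [Function.update_apply, hj, hab]
    simp [hammingDist, hfil]
  -- each "row" (varying the last coordinate over S) is injective
  have hrow : ∀ (x : Fin (n+1) → α), Set.InjOn (fun s => f (Function.update x L s)) S := by
    intro x s hs t ht hst
    by_contra hne
    exact hf (Function.update x L s) (Function.update x L t)
      (by simpa [hL] using hs) (by simpa [hL] using ht) (H1 x L s t hne) hst
  -- the complement of a row
  set A : (Fin (n+1) → α) → Finset α :=
    fun x => (S.image fun s => f (Function.update x L s))ᶜ with hA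
  have hAcard : ∀ x, (A x).card = 1 := by
    intro x
    have himg : (S.image fun s => f (Function.update x L s)).card = S.card :=
      Finset.card_image_of_injOn (hrow x)
    simp only [hA, Finset.card_compl, himg, hS]
    omega
  have hAne : ∀ x, (A x).Nonempty := fun x => Finset.card_pos.mp (by rw [hAcard]; norm_num)
  set g : (Fin (n+1) → α) → α := fun x => (hAne x).choose with hg
  have hgmem : ∀ x, g x ∈ A x := fun x => (hAne x).choose_spec
  have hgnot : ∀ x s, s ∈ S → f (Function.update x L s) ≠ g x := by
    intro x s hs h
    have h2 := hgmem x
    rw [hA, Finset.mem_compl] at h2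
    exact h2 (h ▸ Finset.mem_image_of_mem _ hs)
  have hguniq : ∀ x v, v ∈ A x → v = g x := by
    intro x v hv
    exact Finset.card_le_one.mp (le_of_eq (hAcard x)) v hv (g x) (hgmem x)
  have hAup : ∀ x a, A (Function.update x L a) = A x := by
    intro x a
    simp only [hA]
    congr 1
    apply Finset.image_congr
    intro s _
    simp only [Function.update_idem]
  have hgup : ∀ x a, g (Function.update x L a) = g x := by
    intro x a
    have h2 := hgmem (Function.update x L a)
    rw [hAup] at h2
    exact hguniq x _ h2
  refine ⟨fun x => if x L ∈ S then f x else g x, ?_, ?_⟩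
  · intro i x
    rw [← Finite.injective_iff_bijective]
    intro a b hab
    simp only at hab
    by_cases hi : i = L
    · subst hi
      simp only [Function.update_self] at hab
      by_cases ha : a ∈ S <;> by_cases hb : b ∈ S
      · rw [if_pos ha, if_pos hb] at hab
        exact hrow x ha hb hab
      · exfalso
        rw [if_pos ha, if_neg hb, hgup] at hab
        exact hgnot x a ha hab
      · exfalso
        rw [if_neg ha, if_pos hb, hgup] at hab
        exact hgnot x b hb hab.symm
      · have hS1 : (Sᶜ : Finset α).card = 1 := by
          rw [Finset.card_compl, hS]; omega
        exact Finset.card_le_one.mp (le_of_eq hS1) a (Finset.mem_compl.mpr ha) b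
          (Finset.mem_compl.mpr hb)
    · have hmema : (Function.update x i a) L = x L := Function.update_of_ne (Ne.symm hi) _ _
      have hmemb : (Function.update x i b) L = x L := Function.update_of_ne (Ne.symm hi) _ _
      by_cases hxS : x L ∈ S
      · rw [if_pos (by rw [hmema]; exact hxS), if_pos (by rw [hmemb]; exact hxS)] at hab
        by_contra hne
        exact hf _ _ (by rw [hmema]; exact hxS) (by rw [hmemb]; exact hxS)
          (H1 x i a b hne) hab
      · rw [if_neg (by rw [hmema]; exact hxS), if_neg (by rw [hmemb]; exact hxS)] at hab
        by_contra hne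
        obtain ⟨v, hv⟩ : ∃ v, g (Function.update x i a) = v := ⟨_, rfl⟩
        have hva : v ∉ S.image fun s => f (Function.update (Function.update x i a) L s) := by
          have h3 := hgmem (Function.update x i a)
          rw [hA, Finset.mem_compl, hv] at h3
          exact h3
        have hvb : v ∉ S.image fun s => f (Function.update (Function.update x i b) L s) := by
          have h3 := hgmem (Function.update x i b)
          rw [hA, Finset.mem_compl, ← hab, hv] at h3
          exact h3
        -- each line in direction i at level s ∈ S is bijective, so v has a preimage
        have hline : ∀ s, s ∈ S → ∃ c, f (Function.update (Function.update x L s) i c) = v := by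
          intro s hs
          have hinj : Function.Injective
              fun c => f (Function.update (Function.update x L s) i c) := by
            intro c d hcd
            by_contra hcd'
            exact hf _ _
              (by rw [Function.update_of_ne (Ne.symm hi), Function.update_self]; exact hs)
              (by rw [Function.update_of_ne (Ne.symm hi), Function.update_self]; exact hs)
              (H1 _ i c d hcd') hcd
          exact (Finite.injective_iff_bijective.mp hinj).2 v
        set φ : α → α := fun s => if hs : s ∈ S then (hline s hs).choose else s with hφ
        have hφspec : ∀ s (hs : s ∈ S),
            f (Function.update (Function.update x L s) i (φ s)) = v := by
          intro s hs
          simp only [hφ, dif_pos hs]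
          exact (hline s hs).choose_spec
        have hφa : ∀ s ∈ S, φ s ≠ a := by
          intro s hs h
          have h2 := hφspec s hs
          rw [h, Function.update_comm (Ne.symm hi)] at h2
          exact hva (h2 ▸ Finset.mem_image_of_mem _ hs)
        have hφb : ∀ s ∈ S, φ s ≠ b := by
          intro s hs h
          have h2 := hφspec s hs
          rw [h, Function.update_comm (Ne.symm hi)] at h2
          exact hvb (h2 ▸ Finset.mem_image_of_mem _ hs)
        have hφinj : Set.InjOn φ S := by
          intro s hs t ht hst
          by_contra hne'
          have h1 := hφspec s hs
          have h2 := hφspec t ht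
          rw [hst] at h1
          rw [Function.update_comm (Ne.symm hi)] at h1 h2
          exact hf _ _ (by rw [Function.update_self]; exact hs)
            (by rw [Function.update_self]; exact ht)
            (H1 (Function.update x i (φ t)) L s t hne') (h1.trans h2.symm)
        have hcount : S.card ≤ (({a, b} : Finset α)ᶜ).card := by
          apply Finset.card_le_card_of_injOn φ _ hφinj
          intro s hs
          simp only [Finset.coe_compl, Set.mem_compl_iff, Finset.mem_coe, Finset.mem_compl, Finset.mem_insert, Finset.mem_singleton, not_or]
          exact ⟨hφa s hs, hφb s hs⟩
        have h2 : (({a, b} : Finset α)ᶜ).card = Fintype.card α - 2 := by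
          rw [Finset.card_compl, Finset.card_pair hne]
        have hlt : 2 ≤ Fintype.card α := Fintype.one_lt_card_iff_nontrivial.mpr ⟨⟨a, b, hne⟩⟩
        rw [hS, h2] at hcount
        omega
  · intro x hx
    exact if_pos hx
end

section
/- Every partial n-ary quasigroup of order N ≤ 3 is extendable; in particular, every latin hypercuboid of order at most 3 can be completed to a latin hypercube. -/
lemma hammingDist_update {α : Type*} [DecidableEq α] {n : ℕ} (x : Fin n → α) (i : Fin n)
    {a b : α} (h : a ≠ b) :
    hammingDist (Function.update x i a) (Function.update x i b) = 1 := by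
  unfold hammingDist
  rw [Finset.card_eq_one]
  refine ⟨i, ?_⟩
  ext j
  by_cases hj : j = i
  · subst hj; simp [h]
  · simp [Function.update_apply, hj]

lemma quasigroup_of_full {α : Type*} [Fintype α] [DecidableEq α] {n : ℕ}
    (f : (Fin (n + 1) → α) → α) (hf : IsPartialQG Finset.univ f) : IsQuasigroup f := by
  intro i x
  rw [← Finite.injective_iff_bijective]
  intro a b hab
  by_contra hne
  exact hf _ _ (Finset.mem_univ _) (Finset.mem_univ _) (hammingDist_update x i hne) hab

lemma exists_quasigroup (α : Type*) [Fintype α] [DecidableEq α] (n : ℕ) :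
    ∃ q : (Fin (n + 1) → α) → α, IsQuasigroup q := by
  cases isEmpty_or_nonempty α with
  | inl h => exact ⟨fun x => x 0, fun i x => (IsEmpty.false (x 0)).elim⟩
  | inr h =>
    haveI : NeZero (Fintype.card α) := ⟨Fintype.card_ne_zero⟩
    obtain ⟨e⟩ : Nonempty (α ≃ ZMod (Fintype.card α)) :=
      ⟨Fintype.equivOfCardEq (by simp [ZMod.card])⟩
    refine ⟨fun x => e.symm (∑ j, e (x j)), ?_⟩
    intro i x
    rw [← Finite.injective_iff_bijective]
    intro a b hab
    have hs : ∀ c : α, ∑ j, e (Function.update x i c j)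
        = e c + ∑ j ∈ Finset.univ \ {i}, e (x j) := by
      intro c
      have : (fun j => e (Function.update x i c j))
          = Function.update (fun j => e (x j)) i (e c) := by
        ext j
        by_cases hj : j = i
        · subst hj; simp
        · simp [Function.update_of_ne hj]
      rw [this]
      simpa using Finset.sum_update_of_mem (Finset.mem_univ i) (fun j => e (x j)) (e c)
    simp only at hab
    have := e.symm.injective hab
    rw [hs, hs] at this
    exact e.injective (add_right_cancel this)

lemma extendable_singleton {α : Type*} [Fintype α] [DecidableEq α] {n : ℕ}
    (s₀ : α) (f : (Fin (n + 1) → α) → α) (hf : IsPartialQG {s₀} f) :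
    Extendable ({s₀} : Finset α) f := by
  haveI : Nonempty α := ⟨s₀⟩
  haveI : NeZero (Fintype.card α) := ⟨Fintype.card_ne_zero⟩
  obtain ⟨e⟩ : Nonempty (α ≃ ZMod (Fintype.card α)) :=
    ⟨Fintype.equivOfCardEq (by simp [ZMod.card])⟩
  set L := Fin.last n with hL
  refine ⟨fun x => e.symm (e (f (Function.update x L s₀)) + e (x L) - e s₀), ?_, ?_⟩
  · intro i x
    rw [← Finite.injective_iff_bijective]
    intro a b hab
    simp only at hab
    by_cases hi : i = L
    · subst hi
      simp only [Function.update_idem, Function.update_self] at hab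
      have h1 := e.symm.injective hab
      have h2 : e a = e b := by
        have := sub_left_inj.mp h1
        exact add_left_cancel this
      exact e.injective h2
    · by_contra hne
      have h1 := e.symm.injective hab
      rw [Function.update_of_ne (Ne.symm hi), Function.update_of_ne (Ne.symm hi)] at h1
      have h2 : f (Function.update (Function.update x i a) L s₀)
          = f (Function.update (Function.update x i b) L s₀) :=
        e.injective (by linear_combination h1)
      rw [Function.update_comm hi, Function.update_comm hi] at h2
      exact hf _ _ (by rw [← hL]; simp [Function.update_of_ne (Ne.symm hi)])
        (by rw [← hL]; simp [Function.update_of_ne (Ne.symm hi)])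
        (hammingDist_update _ i hne) h2
  · intro x hx
    have hx' : x L = s₀ := Finset.mem_singleton.mp hx
    simp [← hx', Function.update_eq_self]

lemma zmod3_missing : ∀ u w : ZMod 3, u ≠ w → -(u + w) ≠ u ∧ -(u + w) ≠ w := by decide

lemma zmod3_key : ∀ u1 u2 u3 w1 w2 w3 : ZMod 3, u1 ≠ u2 → u1 ≠ u3 → u2 ≠ u3 →
    w1 ≠ w2 → w1 ≠ w3 → w2 ≠ w3 → u1 ≠ w1 → u2 ≠ w2 → u3 ≠ w3 → u1 + w1 ≠ u2 + w2 := by decide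

lemma extendable_pair {α : Type*} [Fintype α] [DecidableEq α] {n : ℕ}
    (hcard : Fintype.card α = 3) {s₁ s₂ : α} (hs : s₁ ≠ s₂)
    (f : (Fin (n + 1) → α) → α) (hf : IsPartialQG {s₁, s₂} f) :
    Extendable ({s₁, s₂} : Finset α) f := by
  obtain ⟨e⟩ : Nonempty (α ≃ ZMod 3) :=
    ⟨Fintype.equivOfCardEq (by simp [hcard, ZMod.card])⟩
  set L := Fin.last n with hL
  set S : Finset α := {s₁, s₂} with hS
  -- the third element
  have hSne : S ≠ Finset.univ := by
    intro h
    have h2 : S.card = 2 := Finset.card_pair hs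
    rw [h, Finset.card_univ, hcard] at h2
    omega
  obtain ⟨s₀, hs₀⟩ : ∃ s₀, s₀ ∉ S := by
    by_contra h
    push_neg at h
    exact hSne (Finset.eq_univ_iff_forall.mpr h)
  have hs01 : s₀ ≠ s₁ := fun h => hs₀ (by simp [hS, h])
  have hs02 : s₀ ≠ s₂ := fun h => hs₀ (by simp [hS, h])
  -- every element is s₀, s₁ or s₂
  have huniv : ∀ a : α, a = s₀ ∨ a = s₁ ∨ a = s₂ := by
    have hc : ({s₀, s₁, s₂} : Finset α).card = 3 := by
      rw [Finset.card_insert_of_notMem (by simp [hs01, hs02]),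
        Finset.card_pair hs]
    have := Finset.eq_univ_of_card _ (hc.trans hcard.symm)
    intro a
    have ha : a ∈ ({s₀, s₁, s₂} : Finset α) := this ▸ Finset.mem_univ a
    simpa using ha
  set v : (Fin (n + 1) → α) → α := fun x =>
    e.symm (-(e (f (Function.update x L s₁)) + e (f (Function.update x L s₂)))) with hv
  have hev : ∀ x, e (v x)
      = -(e (f (Function.update x L s₁)) + e (f (Function.update x L s₂))) := by
    intro x; rw [hv]; exact e.apply_symm_apply _
  have h_uw : ∀ x : Fin (n + 1) → α,
      f (Function.update x L s₁) ≠ f (Function.update x L s₂) := by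
    intro x
    exact hf _ _ (by simp [hS, hL]) (by simp [hS, hL]) (hammingDist_update x L hs)
  have heuw : ∀ x : Fin (n + 1) → α,
      e (f (Function.update x L s₁)) ≠ e (f (Function.update x L s₂)) :=
    fun x => e.injective.ne (h_uw x)
  have hv1 : ∀ x, v x ≠ f (Function.update x L s₁) := by
    intro x h
    have h2 := hev x
    rw [h] at h2
    exact (zmod3_missing _ _ (heuw x)).1 h2.symm
  have hv2 : ∀ x, v x ≠ f (Function.update x L s₂) := by
    intro x h
    have h2 := hev x
    rw [h] at h2
    exact (zmod3_missing _ _ (heuw x)).2 h2.symm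
  have hvu : ∀ (x) (c : α), v (Function.update x L c) = v x := by
    intro x c
    rw [hv]
    simp only [Function.update_idem]
  refine ⟨fun x => if x L ∈ S then f x else v x, ?_, ?_⟩
  · intro i x
    rw [← Finite.injective_iff_bijective]
    intro a b hab
    by_contra hne
    simp only at hab
    by_cases hi : i = L
    · subst hi
      simp only [Function.update_self] at hab
      rw [hvu, hvu] at hab
      rcases huniv a with rfl | rfl | rfl <;> rcases huniv b with rfl | rfl | rfl
      · exact hne rfl
      · rw [if_neg hs₀, if_pos (by simp [hS])] at hab
        exact hv1 x hab
      · rw [if_neg hs₀, if_pos (by simp [hS])] at hab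
        exact hv2 x hab
      · rw [if_pos (by simp [hS]), if_neg hs₀] at hab
        exact hv1 x hab.symm
      · exact hne rfl
      · rw [if_pos (by simp [hS]), if_pos (by simp [hS])] at hab
        exact h_uw x hab
      · rw [if_pos (by simp [hS]), if_neg hs₀] at hab
        exact hv2 x hab.symm
      · rw [if_pos (by simp [hS]), if_pos (by simp [hS])] at hab
        exact h_uw x hab.symm
      · exact hne rfl
    · have hxL : ∀ c : α, (Function.update x i c) L = x L :=
        fun c => Function.update_of_ne (Ne.symm hi) _ _
      by_cases hmem : x L ∈ S
      · rw [if_pos (by rw [hxL]; exact hmem), if_pos (by rw [hxL]; exact hmem)] at hab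
        exact hf _ _ (by rw [hxL]; exact hmem) (by rw [hxL]; exact hmem)
          (hammingDist_update x i hne) hab
      · rw [if_neg (by rw [hxL]; exact hmem), if_neg (by rw [hxL]; exact hmem)] at hab
        obtain ⟨c, hca, hcb⟩ : ∃ c : α, c ≠ a ∧ c ≠ b := by
          by_contra h
          push_neg at h
          have hsub : (Finset.univ : Finset α) ⊆ {a, b} := by
            intro c _
            by_cases hca : c = a
            · simp [hca]
            · simp [h c hca]
          have hle := Finset.card_le_card hsub
          have hle2 : ({a, b} : Finset α).card ≤ 2 :=
            (Finset.card_insert_le _ _).trans (by simp)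
          rw [Finset.card_univ, hcard] at hle
          omega
        have hA : ∀ (t : α), t ∈ S → ∀ (c₁ c₂ : α), c₁ ≠ c₂ →
            f (Function.update (Function.update x i c₁) L t)
            ≠ f (Function.update (Function.update x i c₂) L t) := by
          intro t ht c₁ c₂ hcc
          rw [Function.update_comm hi, Function.update_comm hi]
          refine hf _ _ ?_ ?_ (hammingDist_update _ i hcc)
          · rw [Function.update_of_ne (Ne.symm hi), Function.update_self]; exact ht
          · rw [Function.update_of_ne (Ne.symm hi), Function.update_self]; exact ht
        have hs₁S : s₁ ∈ S := by simp [hS]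
        have hs₂S : s₂ ∈ S := by simp [hS]
        have key : e (f (Function.update (Function.update x i a) L s₁))
              + e (f (Function.update (Function.update x i a) L s₂))
            = e (f (Function.update (Function.update x i b) L s₁))
              + e (f (Function.update (Function.update x i b) L s₂)) := by
          have h1 := congrArg e hab
          rw [hev, hev] at h1
          exact neg_injective h1
        exact zmod3_key _ _ (e (f (Function.update (Function.update x i c) L s₁)))
          _ _ (e (f (Function.update (Function.update x i c) L s₂)))
          (e.injective.ne (hA s₁ hs₁S a b hne))
          (e.injective.ne (hA s₁ hs₁S a c (Ne.symm hca)))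
          (e.injective.ne (hA s₁ hs₁S b c (Ne.symm hcb)))
          (e.injective.ne (hA s₂ hs₂S a b hne))
          (e.injective.ne (hA s₂ hs₂S a c (Ne.symm hca)))
          (e.injective.ne (hA s₂ hs₂S b c (Ne.symm hcb)))
          (heuw (Function.update x i a))
          (heuw (Function.update x i b))
          (heuw (Function.update x i c))
          key
  · intro x hx
    exact if_pos hx


theorem extendable_of_order_le_three {α : Type*} [Fintype α] [DecidableEq α] {n : ℕ}
    (hcard : Fintype.card α ≤ 3) (S : Finset α) (f : (Fin (n + 1) → α) → α)
    (hf : IsPartialQG S f) : Extendable S f := by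
  rcases eq_or_ne S ∅ with rfl | hSne
  · obtain ⟨q, hq⟩ := exists_quasigroup α n
    exact ⟨q, hq, by simp⟩
  · have hS1 : 1 ≤ S.card := Finset.card_pos.mpr (Finset.nonempty_of_ne_empty hSne)
    have hle : S.card ≤ Fintype.card α := Finset.card_le_univ S
    by_cases h1 : S.card = 1
    · obtain ⟨s₀, rfl⟩ := Finset.card_eq_one.mp h1
      exact extendable_singleton s₀ f hf
    · by_cases hful : S.card = Fintype.card α
      · have hU : S = Finset.univ := Finset.eq_univ_of_card S hful
        exact ⟨f, quasigroup_of_full f (hU ▸ hf), fun x _ => rfl⟩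
      · have h2 : S.card = 2 := by omega
        have h3 : Fintype.card α = 3 := by omega
        obtain ⟨s₁, s₂, hs, rfl⟩ := Finset.card_eq_two.mp h2
        exact extendable_pair h3 hs f hf
end

section
/- Every latin rectangle can be completed to a latin square: if f : {0,...,N−1} × S → {0,...,N−1} with S ⊆ {0,...,N−1} is such that f is injective in each row and in each column separately, then f extends to an N × N latin square. -/
open Finset

/-- Number of columns avoiding a given symbol. -/
lemma lrc_col_count {N : ℕ} (S : Finset (Fin N)) (f : Fin N → Fin N → Fin N)
    (hrow : ∀ r ∈ S, Function.Injective (f r))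
    (hcol : ∀ c : Fin N, ∀ r ∈ S, ∀ r' ∈ S, f r c = f r' c → r = r')
    (s : Fin N) :
    (univ.filter (fun c => ∀ r ∈ S, f r c ≠ s)).card = N - S.card := by
  classical
  have hbij : ∀ r ∈ S, Function.Bijective (f r) := fun r hr =>
    (Finite.injective_iff_bijective).mp (hrow r hr)
  have hbad : (univ.filter (fun c : Fin N => ∃ r ∈ S, f r c = s)).card = S.card := by
    symm
    apply Finset.card_bij (fun r hr => Fintype.bijInv (hbij r hr) s)
    · intro r hr
      simp only [mem_filter, mem_univ, true_and]
      exact ⟨r, hr, Fintype.rightInverse_bijInv (hbij r hr) s⟩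
    · intro r hr r' hr' h
      apply hcol (Fintype.bijInv (hbij r hr) s) r hr r' hr'
      rw [Fintype.rightInverse_bijInv (hbij r hr) s, h,
        Fintype.rightInverse_bijInv (hbij r' hr') s]
    · intro c hc
      simp only [mem_filter, mem_univ, true_and] at hc
      obtain ⟨r, hr, hrc⟩ := hc
      refine ⟨r, hr, ?_⟩
      apply (hrow r hr)
      rw [Fintype.rightInverse_bijInv (hbij r hr) s, hrc]
  have hsplit := Finset.card_filter_add_card_filter_not
    (s := (univ : Finset (Fin N))) (p := fun c => ∃ r ∈ S, f r c = s)
  have heq : (univ.filter (fun c => ¬∃ r ∈ S, f r c = s)) =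
      (univ.filter (fun c => ∀ r ∈ S, f r c ≠ s)) := by
    apply filter_congr; intro c _; push_neg; rfl
  have hcard : S.card ≤ N := by
    simpa using Finset.card_le_card (Finset.subset_univ S)
  rw [hbad, heq] at hsplit
  simp only [Finset.card_univ, Fintype.card_fin] at hsplit
  omega

/-- Number of symbols avoided in a given column. -/
lemma lrc_sym_count {N : ℕ} (S : Finset (Fin N)) (f : Fin N → Fin N → Fin N)
    (hcol : ∀ c : Fin N, ∀ r ∈ S, ∀ r' ∈ S, f r c = f r' c → r = r')
    (c : Fin N) :
    (univ.filter (fun s => ∀ r ∈ S, f r c ≠ s)).card = N - S.card := by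
  classical
  have hbad : (univ.filter (fun s : Fin N => ∃ r ∈ S, f r c = s)) =
      S.image (fun r => f r c) := by
    ext s; simp [eq_comm]
  have hsplit := Finset.card_filter_add_card_filter_not
    (s := (univ : Finset (Fin N))) (p := fun s => ∃ r ∈ S, f r c = s)
  have heq : (univ.filter (fun s => ¬∃ r ∈ S, f r c = s)) =
      (univ.filter (fun s => ∀ r ∈ S, f r c ≠ s)) := by
    apply filter_congr; intro s _; push_neg; rfl
  have himg : (S.image (fun r => f r c)).card = S.card :=
    Finset.card_image_of_injOn (fun r hr r' hr' h => hcol c r hr r' hr' h)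
  rw [hbad, heq, himg] at hsplit
  have hcard : S.card ≤ N := by
    simpa using Finset.card_le_card (Finset.subset_univ S)
  simp only [Finset.card_univ, Fintype.card_fin] at hsplit
  omega

/-- Existence of a new row extending the rectangle, via Hall's theorem. -/
lemma lrc_new_row {N : ℕ} (S : Finset (Fin N)) (f : Fin N → Fin N → Fin N)
    (hrow : ∀ r ∈ S, Function.Injective (f r))
    (hcol : ∀ c : Fin N, ∀ r ∈ S, ∀ r' ∈ S, f r c = f r' c → r = r')
    (hS : S.card < N) :
    ∃ g : Fin N → Fin N, Function.Injective g ∧ ∀ c, ∀ r ∈ S, f r c ≠ g c := by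
  classical
  set A : Fin N → Finset (Fin N) :=
    fun c => univ.filter (fun s => ∀ r ∈ S, f r c ≠ s) with hA
  have hAcard : ∀ c, (A c).card = N - S.card := fun c => lrc_sym_count S f hcol c
  have hAcol : ∀ s : Fin N, (univ.filter (fun c => s ∈ A c)).card = N - S.card := by
    intro s
    have : (univ.filter (fun c => s ∈ A c)) =
        (univ.filter (fun c => ∀ r ∈ S, f r c ≠ s)) := by
      apply filter_congr; intro c _; simp [hA]
    rw [this]; exact lrc_col_count S f hrow hcol s
  have hpos : 0 < N - S.card := by omega
  have hall : ∀ W : Finset (Fin N), W.card ≤ (W.biUnion A).card := by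
    intro W
    set T := W.sigma (fun c => A c) with hT
    have h1 : T.card = W.card * (N - S.card) := by
      rw [hT, Finset.card_sigma]
      rw [Finset.sum_congr rfl (fun c _ => hAcard c), Finset.sum_const, smul_eq_mul]
    have h2 : T.card = ∑ s ∈ W.biUnion A, (T.filter (fun p => p.2 = s)).card := by
      apply Finset.card_eq_sum_card_fiberwise
      intro p hp
      rw [hT, Finset.mem_coe, Finset.mem_sigma] at hp
      exact Finset.mem_biUnion.mpr ⟨p.1, hp.1, hp.2⟩
    have h3 : ∀ s, (T.filter (fun p => p.2 = s)).card ≤ N - S.card := by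
      intro s
      rw [← hAcol s]
      apply Finset.card_le_card_of_injOn (fun p => p.1)
      · intro p hp
        simp only [Finset.mem_coe, Finset.mem_filter, hT, Finset.mem_sigma] at hp
        simp only [Finset.mem_coe, Finset.mem_filter, Finset.mem_univ, true_and]
        rw [← hp.2]; exact hp.1.2
      · intro p hp q hq h
        simp only [Finset.mem_coe, Finset.mem_filter] at hp hq
        exact Sigma.ext h (by rw [hp.2, hq.2])
    have h4 : T.card ≤ (W.biUnion A).card * (N - S.card) := by
      rw [h2]
      calc ∑ s ∈ W.biUnion A, (T.filter (fun p => p.2 = s)).card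
          ≤ ∑ _s ∈ W.biUnion A, (N - S.card) := Finset.sum_le_sum (fun s _ => h3 s)
        _ = (W.biUnion A).card * (N - S.card) := by rw [Finset.sum_const, smul_eq_mul]
    rw [h1] at h4
    exact Nat.le_of_mul_le_mul_right h4 hpos
  obtain ⟨g, hginj, hgmem⟩ := (Finset.all_card_le_biUnion_card_iff_exists_injective A).mp hall
  refine ⟨g, hginj, fun c r hr => ?_⟩
  have := hgmem c
  simp only [hA, Finset.mem_filter] at this
  exact this.2 r hr

lemma lrc_aux {N : ℕ} (m : ℕ) : ∀ (S : Finset (Fin N)) (f : Fin N → Fin N → Fin N),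
    N - S.card ≤ m →
    (∀ r ∈ S, Function.Injective (f r)) →
    (∀ c : Fin N, ∀ r ∈ S, ∀ r' ∈ S, f r c = f r' c → r = r') →
    ∃ q : Fin N → Fin N → Fin N,
      (∀ r, Function.Bijective (q r)) ∧
      (∀ c, Function.Bijective fun r => q r c) ∧
      ∀ r ∈ S, ∀ c, q r c = f r c := by
  classical
  induction m with
  | zero =>
    intro S f hm hrow hcol
    have hScard : S.card ≤ N := by simpa using Finset.card_le_card (Finset.subset_univ S)
    have hSuniv : S = univ := by
      apply Finset.eq_univ_of_card
      simp only [Fintype.card_fin]; omega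
    subst hSuniv
    refine ⟨f, fun r => (Finite.injective_iff_bijective).mp (hrow r (mem_univ r)), ?_,
      fun r _ c => rfl⟩
    intro c
    apply (Finite.injective_iff_bijective).mp
    intro r r' h
    exact hcol c r (mem_univ r) r' (mem_univ r') h
  | succ m ih =>
    intro S f hm hrow hcol
    by_cases hSuniv : S = univ
    · exact ih S f (by simp [hSuniv]) hrow hcol
    · have hScard : S.card < N := by
        have := Finset.card_lt_card (Finset.ssubset_univ_iff.mpr hSuniv)
        simpa using this
      obtain ⟨r₀, hr₀⟩ : ∃ r₀, r₀ ∉ S := by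
        by_contra h; push_neg at h; exact hSuniv (Finset.eq_univ_iff_forall.mpr h)
      obtain ⟨g, hginj, hgnew⟩ := lrc_new_row S f hrow hcol hScard
      set f' : Fin N → Fin N → Fin N := fun r c => if r = r₀ then g c else f r c with hf'
      have hf'r₀ : ∀ c, f' r₀ c = g c := fun c => if_pos rfl
      have hf'S : ∀ r ∈ S, ∀ c, f' r c = f r c := by
        intro r hr c
        have : r ≠ r₀ := fun h => hr₀ (h ▸ hr)
        simp [hf', this]
      have hrow' : ∀ r ∈ insert r₀ S, Function.Injective (f' r) := by
        intro r hr
        rcases Finset.mem_insert.mp hr with h | h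
        · subst h; intro c c' hcc; exact hginj (by rwa [hf'r₀, hf'r₀] at hcc)
        · intro c c' hcc
          exact hrow r h (by rwa [hf'S r h, hf'S r h] at hcc)
      have hcol' : ∀ c : Fin N, ∀ r ∈ insert r₀ S, ∀ r' ∈ insert r₀ S,
          f' r c = f' r' c → r = r' := by
        intro c r hr r' hr' h
        rcases Finset.mem_insert.mp hr with h1 | h1 <;>
          rcases Finset.mem_insert.mp hr' with h2 | h2
        · rw [h1, h2]
        · subst h1; rw [hf'r₀, hf'S r' h2] at h
          exact absurd h.symm (hgnew c r' h2)
        · subst h2; rw [hf'r₀, hf'S r h1] at h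
          exact absurd h (hgnew c r h1)
        · rw [hf'S r h1, hf'S r' h2] at h
          exact hcol c r h1 r' h2 h
      have hcard' : N - (insert r₀ S).card ≤ m := by
        rw [Finset.card_insert_of_notMem hr₀]
        omega
      obtain ⟨q, hq1, hq2, hq3⟩ := ih (insert r₀ S) f' hcard' hrow' hcol'
      exact ⟨q, hq1, hq2, fun r hr c =>
        (hq3 r (Finset.mem_insert_of_mem hr) c).trans (hf'S r hr c)⟩

/-- Every latin rectangle completes to a latin square: a partial array
`f : {0,…,N-1} × S → {0,…,N-1}` injective in each row (for rows in `S`) and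
in each column (restricted to rows in `S`) extends to an `N × N` latin square. -/
theorem latin_rectangle_completion {N : ℕ} (S : Finset (Fin N))
    (f : Fin N → Fin N → Fin N)
    (hrow : ∀ r ∈ S, Function.Injective (f r))
    (hcol : ∀ c : Fin N, ∀ r ∈ S, ∀ r' ∈ S, f r c = f r' c → r = r') :
    ∃ q : Fin N → Fin N → Fin N,
      (∀ r, Function.Bijective (q r)) ∧
      (∀ c, Function.Bijective fun r => q r c) ∧
      ∀ r ∈ S, ∀ c, q r c = f r c := by
  exact lrc_aux N S f (Nat.sub_le _ _) hrow hcol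
end

section
/- Completion of latin hypercuboids reduces to the two-layer extension problem: if for every m ≤ n and every pair of m-ary quasigroups f, g of order 4 with f(x̄) ≠ g(x̄) for all x̄ there exists an (m+1)-ary quasigroup F with F(x̄,0) = f(x̄) and F(x̄,1) = g(x̄), and moreover every partial quasigroup of order 4 with |Σ'| ∈ {1,3} is extendable, then every partial n-ary quasigroup of order 4 (any |Σ'|) is extendable. (Special case: extend a thickness-2 latin hypercuboid of order 4 one layer at a time.) -/
lemma ham_update {k : ℕ} (x : Fin k → Fin 4) (i : Fin k) {a b : Fin 4} (h : a ≠ b) :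
    hammingDist (Function.update x i a) (Function.update x i b) = 1 := by
  have hf : ({j | Function.update x i a j ≠ Function.update x i b j} : Finset (Fin k))
      = {i} := by
    ext j
    rcases eq_or_ne j i with rfl | hj <;>
      simp [Function.update_of_ne, *]
  simp [hammingDist, hf]

lemma quasi_of_inj {k : ℕ} (f : (Fin k → Fin 4) → Fin 4)
    (h : ∀ (i : Fin k) (x : Fin k → Fin 4) (a b : Fin 4), a ≠ b →
      f (Function.update x i a) ≠ f (Function.update x i b)) : IsQuasigroup f := by
  intro i x
  rw [Fintype.bijective_iff_injective_and_card]
  exact ⟨fun a b hab => by by_contra hne; exact h i x a b hne hab, rfl⟩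

/-- Reduction to the two-layer problem for order 4: if any two disjoint
`m`-ary quasigroups (`m ≤ n`) of order 4 extend to two layers of an
`(m+1)`-ary quasigroup, and partial quasigroups of thickness 1 or 3 are
extendable, then every partial `(n+1)`-ary quasigroup of order 4 is
extendable. -/
theorem reduction_to_two_layers (n : ℕ)
    (H1 : ∀ m ≤ n, ∀ f g : (Fin m → Fin 4) → Fin 4,
      IsQuasigroup f → IsQuasigroup g → (∀ x, f x ≠ g x) →
      ∃ F : (Fin (m + 1) → Fin 4) → Fin 4, IsQuasigroup F ∧
        (∀ x, F (Fin.snoc x 0) = f x) ∧ (∀ x, F (Fin.snoc x 1) = g x))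
    (H2 : ∀ (m : ℕ) (S : Finset (Fin 4)), S.card = 1 ∨ S.card = 3 →
      ∀ f : (Fin (m + 1) → Fin 4) → Fin 4, IsPartialQG S f → Extendable S f) :
    ∀ (S : Finset (Fin 4)) (f : (Fin (n + 1) → Fin 4) → Fin 4),
      IsPartialQG S f → Extendable S f := by
  intro S f hf
  have hcard : S.card ≤ 4 := le_trans (Finset.card_le_card (Finset.subset_univ S)) (by simp)
  interval_cases h : S.card
  · -- card 0 : S = ∅, use the sum quasigroup
    have hS : S = ∅ := Finset.card_eq_zero.mp h
    refine ⟨fun x => ∑ i, x i, ?_, ?_⟩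
    · intro i x
      have he : (fun a => ∑ j, Function.update x i a j)
          = fun a => a + ∑ j ∈ Finset.univ.erase i, x j := by
        funext a
        rw [Finset.sum_update_of_mem (Finset.mem_univ i)]
        simp [Finset.sdiff_singleton_eq_erase]
      rw [he]
      exact (Equiv.addRight _).bijective
    · intro x hx
      simp [hS] at hx
  · exact H2 n S (Or.inl h) f hf
  · -- card 2 : the two-layer case
    obtain ⟨s, t, hst, rfl⟩ := Finset.card_eq_two.mp h
    set f0 : (Fin n → Fin 4) → Fin 4 := fun x => f (Fin.snoc x s) with hf0def
    set g0 : (Fin n → Fin 4) → Fin 4 := fun x => f (Fin.snoc x t) with hg0def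
    have hlayer : ∀ c : Fin 4, c ∈ ({s, t} : Finset (Fin 4)) →
        IsQuasigroup (fun x : Fin n → Fin 4 => f (Fin.snoc x c)) := by
      intro c hc
      apply quasi_of_inj
      intro j x a b hab
      apply hf
      · rw [Fin.snoc_last]; exact hc
      · rw [Fin.snoc_last]; exact hc
      · rw [Fin.snoc_update, Fin.snoc_update]
        exact ham_update _ _ hab
    have hfg : ∀ x, f0 x ≠ g0 x := by
      intro x
      apply hf
      · rw [Fin.snoc_last]; simp
      · rw [Fin.snoc_last]; simp
      · have hd := ham_update (Fin.snoc x t : Fin (n + 1) → Fin 4) (Fin.last n) hst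
        rw [Fin.update_snoc_last, Fin.update_snoc_last] at hd
        exact hd
    obtain ⟨F, hF, hF0, hF1⟩ := H1 n le_rfl f0 g0
      (hlayer s (by simp)) (hlayer t (by simp)) hfg
    -- a permutation sending s ↦ 0, t ↦ 1
    set σ : Equiv.Perm (Fin 4) :=
      (Equiv.swap s 0).trans (Equiv.swap (Equiv.swap s 0 t) 1) with hσdef
    have hts : Equiv.swap s 0 t ≠ 0 := by
      intro hcon
      exact hst ((Equiv.swap s 0).injective (by simp [hcon]))
    have hσs : σ s = 0 := by
      simp only [hσdef, Equiv.trans_apply, Equiv.swap_apply_left]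
      exact Equiv.swap_apply_of_ne_of_ne (Ne.symm hts) (by decide)
    have hσt : σ t = 1 := by
      simp [hσdef]
    refine ⟨fun x => F (Function.update x (Fin.last n) (σ (x (Fin.last n)))), ?_, ?_⟩
    · intro i x
      cases i using Fin.lastCases with
      | last =>
        have he : (fun a => F (Function.update (Function.update x (Fin.last n) a)
              (Fin.last n) (σ (Function.update x (Fin.last n) a (Fin.last n)))))
            = (fun b => F (Function.update x (Fin.last n) b)) ∘ σ := by
          funext a
          simp [Function.update_idem]
        rw [he]
        exact (hF (Fin.last n) x).comp σ.bijective
      | cast j =>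
        have hne : (Fin.castSucc j : Fin (n + 1)) ≠ Fin.last n :=
          (Fin.castSucc_lt_last j).ne
        have he : (fun a => F (Function.update (Function.update x (Fin.castSucc j) a)
              (Fin.last n) (σ (Function.update x (Fin.castSucc j) a (Fin.last n)))))
            = fun a => F (Function.update
              (Function.update x (Fin.last n) (σ (x (Fin.last n)))) (Fin.castSucc j) a) := by
          funext a
          rw [Function.update_of_ne hne.symm, Function.update_comm hne]
        rw [he]
        exact hF (Fin.castSucc j) _
    · intro x hx
      have hsnoc : ∀ c : Fin 4, Function.update x (Fin.last n) c
          = Fin.snoc (fun j : Fin n => x (Fin.castSucc j)) c := by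
        intro c
        ext j
        cases j using Fin.lastCases with
        | last => simp
        | cast j => simp [Function.update_of_ne (Fin.castSucc_lt_last j).ne]
      have hxeq : ∀ c : Fin 4, x (Fin.last n) = c →
          Fin.snoc (fun j : Fin n => x (Fin.castSucc j)) c = x := by
        intro c hc
        ext j
        cases j using Fin.lastCases with
        | last => simp [hc]
        | cast j => simp
      simp only [Finset.mem_insert, Finset.mem_singleton] at hx
      show F (Function.update x (Fin.last n) (σ (x (Fin.last n)))) = f x
      rcases hx with hx | hx
      · rw [hx, hσs, hsnoc 0, hF0, hf0def]
        exact congrArg f (hxeq s hx)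
      · rw [hx, hσt, hsnoc 1, hF1, hg0def]
        exact congrArg f (hxeq t hx)
  · exact H2 n S (Or.inr h) f hf
  · -- card 4 : S = univ, f itself is a quasigroup
    have hS : S = Finset.univ := Finset.eq_univ_of_card S (by simp [h])
    refine ⟨f, ?_, fun _ _ => rfl⟩
    apply quasi_of_inj
    intro i x a b hab
    apply hf
    · rw [hS]; exact Finset.mem_univ _
    · rw [hS]; exact Finset.mem_univ _
    · exact ham_update _ _ hab
end
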